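/- arXiv:1902.02929 — 4 statements merged into one kernel-verified Lean document; each statement's English description precedes it below -/
import Mathlib

section
/- Let p be a prime and n ≥ 1. For every matrix M over 𝔽_p with n columns, none of which is the zero column, and every nonzero vector v in the row space of M, if p·λ_p(n − ‖v‖) > ‖v‖ (with the convention λ_p(0) = 0), then there exists a nonzero vector z in the row space of M with ‖z‖ > ‖v‖. -/
/-- The row space of a matrix over `ZMod p`: all linear combinations of its rows. -/
def rowSpace {p m n : ℕ} (M : Matrix (Fin m) (Fin n) (ZMod p)) :
    Submodule (ZMod p) (Fin n → ZMod p) :=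
  Submodule.span (ZMod p) {v | ∃ i, v = M i}

/-- The capacity of a matrix: the maximal Hamming weight of a vector in its row space. -/
noncomputable def capacity {p m n : ℕ} (M : Matrix (Fin m) (Fin n) (ZMod p)) : ℕ :=
  sSup (hammingNorm '' (rowSpace M : Set (Fin n → ZMod p)))

/-- `lambdaP p n` is the minimum capacity over all matrices over `𝔽_p`
with `n` columns, none of which is a zero column.  (For `n = 0` this gives `0`.) -/
noncomputable def lambdaP (p n : ℕ) : ℕ :=
  sInf {c | ∃ (m : ℕ) (M : Matrix (Fin m) (Fin n) (ZMod p)),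
    (∀ j, ∃ i, M i j ≠ 0) ∧ c = capacity M}

/-- `sigmaP p k = 1 + p + ⋯ + p^k`. -/
def sigmaP (p k : ℕ) : ℕ := ∑ j ∈ Finset.range (k + 1), p ^ j

theorem statement0 (p : ℕ) (hp : p.Prime) (n : ℕ) (hn : 1 ≤ n)
    (m : ℕ) (M : Matrix (Fin m) (Fin n) (ZMod p))
    (hM : ∀ j, ∃ i, M i j ≠ 0)
    (v : Fin n → ZMod p) (hv : v ∈ rowSpace M) (hv0 : v ≠ 0)
    (h : p * lambdaP p (n - hammingNorm v) > hammingNorm v) :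
    ∃ z ∈ rowSpace M, z ≠ 0 ∧ hammingNorm z > hammingNorm v := by
  haveI : Fact p.Prime := ⟨hp⟩
  set S : Finset (Fin n) := Finset.univ.filter (fun j => v j ≠ 0) with hS
  have hnormv : hammingNorm v = S.card := rfl
  set k := n - hammingNorm v with hkdef
  have hcard : Fintype.card {j : Fin n // v j = 0} = k := by
    rw [Fintype.card_subtype]
    have := Finset.card_filter_add_card_filter_not
      (s := (Finset.univ : Finset (Fin n))) (p := fun j => v j = 0)
    simp only [Finset.card_univ, Fintype.card_fin] at this
    have hne : (Finset.univ.filter fun j => ¬ v j = 0) = S := rfl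
    rw [hne] at this
    omega
  let e : Fin k ≃ {j : Fin n // v j = 0} := (Fintype.equivFinOfCardEq hcard).symm
  set M' : Matrix (Fin m) (Fin k) (ZMod p) := fun i j => M i (e j) with hM'def
  have hM' : ∀ j, ∃ i, M' i j ≠ 0 := fun j => hM (e j)
  have hlam : lambdaP p k ≤ capacity M' := Nat.sInf_le ⟨m, M', hM', rfl⟩
  set r : (Fin n → ZMod p) →ₗ[ZMod p] (Fin k → ZMod p) :=
    LinearMap.funLeft (ZMod p) (ZMod p) (fun j => (e j : Fin n)) with hrdef
  have hmap : rowSpace M' = (rowSpace M).map r := by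
    rw [rowSpace, rowSpace, Submodule.map_span]
    congr 1
    ext x
    constructor
    · rintro ⟨i, rfl⟩; exact ⟨M i, ⟨i, rfl⟩, rfl⟩
    · rintro ⟨y, ⟨i, rfl⟩, rfl⟩; exact ⟨i, rfl⟩
  have hbdd : BddAbove (hammingNorm '' (rowSpace M' : Set (Fin k → ZMod p))) := by
    refine ⟨k, ?_⟩
    rintro x ⟨y, _, rfl⟩
    simpa using (hammingNorm_le_card_fintype (x := y))
  have hne : (hammingNorm '' (rowSpace M' : Set (Fin k → ZMod p))).Nonempty :=
    ⟨hammingNorm (0 : Fin k → ZMod p), 0, Submodule.zero_mem _, rfl⟩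
  obtain ⟨w', hw'mem, hw'⟩ := Nat.sSup_mem hne hbdd
  rw [show ((rowSpace M' : Set (Fin k → ZMod p))) = ((rowSpace M).map r : Set (Fin k → ZMod p))
      from by rw [hmap]] at hw'mem
  obtain ⟨w, hwmem, rfl⟩ := hw'mem
  have hrw : lambdaP p k ≤ hammingNorm (r w) := by rw [hw']; exact hlam
  -- choose a good scalar c
  have hcount : ∀ j ∈ S, (Finset.univ.filter fun c : ZMod p => c * v j + w j = 0).card = 1 := by
    intro j hj
    have hvj : v j ≠ 0 := by simpa [hS] using hj
    have : (Finset.univ.filter fun c : ZMod p => c * v j + w j = 0)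
        = {(-(w j)) / v j} := by
      ext c
      simp only [Finset.mem_filter, Finset.mem_univ, true_and, Finset.mem_singleton]
      rw [eq_div_iff hvj]
      constructor
      · intro hc; linear_combination hc
      · intro hc; linear_combination hc
    rw [this, Finset.card_singleton]
  have hsum : ∑ c : ZMod p, (S.filter fun j => c * v j + w j = 0).card = S.card := by
    simp_rw [Finset.card_filter]
    rw [Finset.sum_comm]
    rw [Finset.sum_congr rfl fun j hj => ?_, Finset.sum_const, smul_eq_mul, mul_one]
    rw [← Finset.card_filter]
    exact hcount j hj
  have hex : ∃ c : ZMod p, (S.filter fun j => c * v j + w j = 0).card < lambdaP p k := by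
    by_contra hcon
    push_neg at hcon
    have hge : (Finset.univ : Finset (ZMod p)).card • lambdaP p k
        ≤ ∑ c : ZMod p, (S.filter fun j => c * v j + w j = 0).card :=
      Finset.card_nsmul_le_sum _ _ _ fun c _ => hcon c
    rw [hsum, Finset.card_univ, ZMod.card p, smul_eq_mul] at hge
    rw [hnormv] at h
    omega
  obtain ⟨c, hc⟩ := hex
  set z : Fin n → ZMod p := c • v + w with hz
  have hzmem : z ∈ rowSpace M := Submodule.add_mem _ (Submodule.smul_mem _ c hv) hwmem
  have hzj : ∀ j, z j = c * v j + w j := fun j => rfl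
  -- count nonzero coords of z on S
  set A : Finset (Fin n) := S.filter (fun j => z j ≠ 0) with hA
  set B : Finset (Fin n) := (Finset.univ.filter fun j => v j = 0).filter (fun j => z j ≠ 0) with hB
  have hAcard : A.card = S.card - (S.filter fun j => c * v j + w j = 0).card := by
    have := Finset.card_filter_add_card_filter_not
      (s := S) (p := fun j => z j = 0)
    have heq : (S.filter fun j => z j = 0) = (S.filter fun j => c * v j + w j = 0) := by
      apply Finset.filter_congr; intro j _; rw [hzj]
    rw [heq] at this
    have heq2 : (S.filter fun j => ¬ z j = 0) = A := rfl
    rw [heq2] at this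
    omega
  have hBcard : B.card = hammingNorm (r w) := by
    have : hammingNorm (r w) = (Finset.univ.filter fun l : Fin k => w (e l) ≠ 0).card := rfl
    rw [this]
    apply Finset.card_bij (fun j hj => e.symm ⟨j, by
      simp only [hB, Finset.mem_filter] at hj
      exact hj.1.2⟩)
    · intro j hj
      simp only [hB, Finset.mem_filter, Finset.mem_univ, true_and] at hj
      simp only [Finset.mem_filter, Finset.mem_univ, true_and]
      obtain ⟨hj1, hj2⟩ := hj
      have hvj : v j = 0 := hj1
      have : (e (e.symm ⟨j, hvj⟩) : Fin n) = j := by rw [Equiv.apply_symm_apply]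
      rw [this]
      intro hwj
      apply hj2
      rw [hzj, hvj, mul_zero, zero_add, hwj]
    · intro j1 hj1 j2 hj2 heq
      have h1 := congrArg (fun l => ((e l : {j : Fin n // v j = 0}) : Fin n)) heq
      simpa [Equiv.apply_symm_apply] using h1
    · intro l hl
      simp only [Finset.mem_filter, Finset.mem_univ, true_and] at hl
      refine ⟨(e l : Fin n), ?_, ?_⟩
      · simp only [hB, Finset.mem_filter, Finset.mem_univ, true_and]
        refine ⟨(e l).2, ?_⟩
        rw [hzj, (e l).2, mul_zero, zero_add]
        exact hl
      · rw [show (⟨(e l : Fin n), (e l).2⟩ : {j : Fin n // v j = 0}) = e l from rfl,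
          Equiv.symm_apply_apply]
  have hdisj : Disjoint A B := by
    rw [Finset.disjoint_left]
    intro j hjA hjB
    have h1 : v j ≠ 0 := (Finset.mem_filter.mp (Finset.mem_filter.mp hjA).1).2
    have h2 : v j = 0 := (Finset.mem_filter.mp (Finset.mem_filter.mp hjB).1).2
    exact h1 h2
  have hsub : A ∪ B ⊆ Finset.univ.filter (fun j => z j ≠ 0) := by
    intro j hj
    rcases Finset.mem_union.mp hj with hj | hj
    · exact Finset.mem_filter.mpr ⟨Finset.mem_univ _, (Finset.mem_filter.mp hj).2⟩
    · exact Finset.mem_filter.mpr ⟨Finset.mem_univ _, (Finset.mem_filter.mp hj).2⟩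
  have hnormz : hammingNorm z = (Finset.univ.filter fun j => z j ≠ 0).card := rfl
  have hge : A.card + B.card ≤ hammingNorm z := by
    rw [hnormz, ← Finset.card_union_of_disjoint hdisj]
    exact Finset.card_le_card hsub
  have hZle : (S.filter fun j => c * v j + w j = 0).card ≤ S.card :=
    Finset.card_le_card (Finset.filter_subset _ _)
  have hfinal : hammingNorm z > hammingNorm v := by
    rw [hnormv]
    have : lambdaP p k ≤ B.card := by rw [hBcard]; exact hrw
    omega
  exact ⟨z, hzmem, fun hz0 => by simp [hz0, hammingNorm_zero] at hfinal, hfinal⟩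
end

section
/- Let p be a prime and let σ_j = Σ_{i=0}^{j} p^i. Suppose n = Σ_{j=ℓ}^{k} b_j σ_j where the b_j are integers with b_k ≥ 1, 0 ≤ b_j ≤ p−1 for all j ≠ ℓ, and 1 ≤ b_ℓ ≤ p. Then λ_p(n) ≥ Σ_{j=ℓ}^{k} b_j p^j. -/
/-!
Write `S(c) = ∑_{i ≥ 0} ⌊c / p^i⌋`. Let `V` be the row space, `c` its largest weight, and pick
`v ∈ V` of largest weight `c₀ ≤ c`. Averaging the weights of `u + t • v` over `t ∈ 𝔽_p` shows that
every `u ∈ V` has at most `c₀ / p` nonzero coordinates where `v` vanishes; inducting on those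
coordinates gives `n ≤ c₀ + S(c₀ / p) = S(c₀) ≤ S(c)`. So `λ_p(n) ≥ C` whenever `S(C - 1) < n`.
For `C = ∑ b_j p^j` the base-`p` digits of `C - 1` are `b_j` above `ℓ`, `b_ℓ - 1` at `ℓ` and `p - 1`
below `ℓ`, and `S` of a number with digits `d_j` is `∑ d_j σ_j`, which gives `S(C - 1) < n`.
-/

open Finset

/-- `∑_{i ≥ 0} ⌊x / q^i⌋`; for `q ≥ 2` the terms with `i > x` vanish. -/
def sumDivPow (q x : ℕ) : ℕ := ∑ i ∈ range (x + 1), x / q ^ i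

section SumDivPow

variable {q : ℕ}

theorem sumDivPow_eq_sum_range (hq : 1 < q) {x N : ℕ} (hN : x < N) :
    sumDivPow q x = ∑ i ∈ range N, x / q ^ i := by
  refine sum_subset (range_subset_range.2 hN) fun i _ hi => Nat.div_eq_of_lt ?_
  simp only [mem_range, not_lt] at hi
  exact (Nat.lt_pow_self hq).trans_le (Nat.pow_le_pow_right (by omega) (by omega))

theorem sumDivPow_eq_add_sumDivPow_div (hq : 1 < q) (x : ℕ) :
    sumDivPow q x = x + sumDivPow q (x / q) := by
  rw [sumDivPow_eq_sum_range hq (Nat.lt_succ_of_lt (Nat.lt_succ_self x)), sum_range_succ',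
    sumDivPow_eq_sum_range hq (Nat.lt_succ_of_le (Nat.div_le_self x q))]
  simp only [pow_succ', ← Nat.div_div_eq_div_mul, pow_zero, Nat.div_one, add_comm]

theorem sumDivPow_zero : sumDivPow q 0 = 0 := by
  simp [sumDivPow]

theorem sumDivPow_mono : Monotone (sumDivPow q) := fun x y hxy =>
  calc ∑ i ∈ range (x + 1), x / q ^ i ≤ ∑ i ∈ range (x + 1), y / q ^ i :=
        sum_le_sum fun _ _ => Nat.div_le_div_right hxy
    _ ≤ ∑ i ∈ range (y + 1), y / q ^ i :=
        sum_le_sum_of_subset (range_subset_range.2 (by omega))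

theorem sigmaP_zero : sigmaP q 0 = 1 := by
  simp [sigmaP]

theorem sigmaP_succ (m : ℕ) : sigmaP q (m + 1) = sigmaP q m + q ^ (m + 1) :=
  sum_range_succ _ _

theorem sumDivPow_lt_sigmaP (hq : 1 < q) {m x : ℕ} (hx : x < q ^ m) :
    sumDivPow q x < sigmaP q m := by
  induction m generalizing x with
  | zero => simp_all [sumDivPow_zero, sigmaP_zero]
  | succ m ih =>
    have hdiv : x / q < q ^ m := Nat.div_lt_of_lt_mul (by rwa [← pow_succ'])
    rw [sumDivPow_eq_add_sumDivPow_div hq, sigmaP_succ]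
    have := ih hdiv
    omega

theorem sumDivPow_mul_pow_add (hq : 1 < q) {b m r : ℕ} (hb : b < q) (hr : r < q ^ m) :
    sumDivPow q (b * q ^ m + r) = b * sigmaP q m + sumDivPow q r := by
  induction m generalizing r with
  | zero =>
    obtain rfl : r = 0 := by simpa using hr
    rw [sumDivPow_eq_add_sumDivPow_div hq, Nat.div_eq_of_lt (by simpa using hb)]
    simp [sumDivPow_zero, sigmaP_zero]
  | succ m ih =>
    have hdiv : (b * q ^ (m + 1) + r) / q = b * q ^ m + r / q := by
      rw [pow_succ, ← mul_assoc, add_comm, Nat.add_mul_div_right _ _ (by omega), add_comm]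
    have hr' : r / q < q ^ m := Nat.div_lt_of_lt_mul (by rwa [← pow_succ'])
    rw [sumDivPow_eq_add_sumDivPow_div hq, hdiv, ih hr', sigmaP_succ,
      sumDivPow_eq_add_sumDivPow_div hq r]
    ring

end SumDivPow

theorem sumDivPow_sum_mul_pow_sub_one_lt {q ℓ k : ℕ} (hq : 1 < q) (hℓk : ℓ ≤ k) (b : ℕ → ℕ)
    (hbℓ1 : 1 ≤ b ℓ) (hbℓ2 : b ℓ ≤ q) (hb : ∀ j, ℓ < j → j ≤ k → b j < q) :
    sumDivPow q (∑ j ∈ Icc ℓ k, b j * q ^ j - 1) < ∑ j ∈ Icc ℓ k, b j * sigmaP q j := by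
  -- The bound `∑ b j * q ^ j ≤ q ^ (k + 1)` keeps the lower part below the next digit.
  suffices h : 0 < ∑ j ∈ Icc ℓ k, b j * q ^ j ∧ ∑ j ∈ Icc ℓ k, b j * q ^ j ≤ q ^ (k + 1) ∧
      sumDivPow q (∑ j ∈ Icc ℓ k, b j * q ^ j - 1) < ∑ j ∈ Icc ℓ k, b j * sigmaP q j from h.2.2
  induction k, hℓk using Nat.le_induction with
  | base =>
    obtain ⟨c, hc⟩ : ∃ c, b ℓ = c + 1 := ⟨b ℓ - 1, by omega⟩
    rw [hc] at hbℓ2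
    simp only [Icc_self, sum_singleton, hc]
    have hpow : 0 < q ^ ℓ := by positivity
    refine ⟨by positivity, by rw [pow_succ']; gcongr, ?_⟩
    rw [show (c + 1) * q ^ ℓ - 1 = c * q ^ ℓ + (q ^ ℓ - 1) by rw [add_mul, one_mul]; omega,
      sumDivPow_mul_pow_add hq (by omega) (by omega), add_mul, one_mul]
    have := sumDivPow_lt_sigmaP hq (Nat.sub_lt hpow one_pos)
    omega
  | succ k hℓk ih =>
    obtain ⟨hpos, hle, hlt⟩ := ih fun j hℓj hjk => hb j hℓj (by omega)
    have hbk : b (k + 1) < q := hb (k + 1) (by omega) le_rfl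
    rw [sum_Icc_succ_top (by omega), sum_Icc_succ_top (by omega)]
    refine ⟨by omega, ?_, ?_⟩
    · calc ∑ j ∈ Icc ℓ k, b j * q ^ j + b (k + 1) * q ^ (k + 1)
          ≤ (b (k + 1) + 1) * q ^ (k + 1) := by rw [add_mul, one_mul]; omega
        _ ≤ q ^ (k + 1 + 1) := by rw [pow_succ' q (k + 1)]; gcongr; omega
    · rw [show ∑ j ∈ Icc ℓ k, b j * q ^ j + b (k + 1) * q ^ (k + 1) - 1
          = b (k + 1) * q ^ (k + 1) + (∑ j ∈ Icc ℓ k, b j * q ^ j - 1) by omega,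
        sumDivPow_mul_pow_add hq hbk (by omega)]
      omega

section Weight

variable {F ι : Type*} [Field F] [Fintype F] [DecidableEq F]

theorem card_filter_add_mul_ne_zero (a : F) {b : F} (hb : b ≠ 0) :
    #{t | a + t * b ≠ 0} = Fintype.card F - 1 := by
  have hroot : ∀ t : F, a + t * b ≠ 0 ↔ t ≠ -a / b := fun t => by
    rw [Ne, Ne, eq_div_iff hb, eq_neg_iff_add_eq_zero, add_comm]
  simp only [hroot, filter_ne', card_erase_of_mem (mem_univ _), card_univ]

theorem card_filter_add_mul_ne_zero_eq (a b : F) :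
    #{t | a + t * b ≠ 0} = Fintype.card F * (if b = 0 ∧ a ≠ 0 then 1 else 0) +
      (Fintype.card F - 1) * (if b ≠ 0 then 1 else 0) := by
  by_cases hb : b = 0
  · by_cases ha : a = 0 <;> simp [hb, ha]
  · simp [hb, card_filter_add_mul_ne_zero a hb]

theorem card_mul_card_filter_le {s : Finset ι} {u v : ι → F}
    (h : ∀ t : F, #{j ∈ s | (u + t • v) j ≠ 0} ≤ #{j ∈ s | v j ≠ 0}) :
    Fintype.card F * #{j ∈ s | v j = 0 ∧ u j ≠ 0} ≤ #{j ∈ s | v j ≠ 0} := by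
  set q := Fintype.card F
  have hsum : ∑ t : F, #{j ∈ s | (u + t • v) j ≠ 0} =
      q * #{j ∈ s | v j = 0 ∧ u j ≠ 0} + (q - 1) * #{j ∈ s | v j ≠ 0} := by
    simp only [card_filter, Pi.add_apply, Pi.smul_apply, smul_eq_mul]
    rw [sum_comm]
    simp only [card_filter_add_mul_ne_zero_eq, sum_add_distrib, ← mul_sum, sum_boole, Nat.cast_id]
    rfl
  have hle : ∑ t : F, #{j ∈ s | (u + t • v) j ≠ 0} ≤ q * #{j ∈ s | v j ≠ 0} := by
    simpa using sum_le_sum fun t (_ : t ∈ univ) => h t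
  have hq : (q - 1) * #{j ∈ s | v j ≠ 0} + #{j ∈ s | v j ≠ 0} = q * #{j ∈ s | v j ≠ 0} := by
    rw [Nat.sub_one_mul, Nat.sub_add_cancel (Nat.le_mul_of_pos_left _ Fintype.card_pos)]
  omega

variable [Fintype ι]

theorem card_le_sumDivPow (V : Submodule F (ι → F)) (c : ℕ) (s : Finset ι)
    (hs : ∀ j ∈ s, ∃ v ∈ V, v j ≠ 0) (hc : ∀ v ∈ V, #{j ∈ s | v j ≠ 0} ≤ c) :
    #s ≤ sumDivPow (Fintype.card F) c := by
  induction c using Nat.strong_induction_on generalizing s with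
  | _ c ih =>
  rcases s.eq_empty_or_nonempty with rfl | ⟨j₀, hj₀⟩
  · simp
  obtain ⟨v, hvV, hvmax⟩ := Set.exists_max_image (V : Set (ι → F))
    (fun v => #{j ∈ s | v j ≠ 0}) (Set.toFinite _) ⟨0, V.zero_mem⟩
  set c₀ := #{j ∈ s | v j ≠ 0}
  have hc₀ : 0 < c₀ := by
    obtain ⟨w, hwV, hw⟩ := hs j₀ hj₀
    exact (card_pos.2 ⟨j₀, mem_filter.2 ⟨hj₀, hw⟩⟩).trans_le (hvmax w hwV)
  -- Removing the support of a vector of maximal weight divides the weight bound by `|F|`.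
  have hzero : ∀ u ∈ V, #{j ∈ {j ∈ s | v j = 0} | u j ≠ 0} ≤ c₀ / Fintype.card F := by
    intro u hu
    rw [filter_filter, Nat.le_div_iff_mul_le Fintype.card_pos, mul_comm]
    exact card_mul_card_filter_le fun t => hvmax _ (V.add_mem hu (V.smul_mem t hvV))
  have hrest := ih (c₀ / Fintype.card F)
    ((Nat.div_lt_self hc₀ Fintype.one_lt_card).trans_le (hc v hvV)) {j ∈ s | v j = 0}
    (fun j hj => hs j (mem_filter.1 hj).1) hzero
  calc #s = c₀ + #{j ∈ s | v j = 0} := by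
        rw [← card_filter_add_card_filter_not (s := s) (fun j => v j ≠ 0)]
        simp only [not_not]
        rfl
    _ ≤ c₀ + sumDivPow (Fintype.card F) (c₀ / Fintype.card F) := by omega
    _ = sumDivPow (Fintype.card F) c₀ :=
        (sumDivPow_eq_add_sumDivPow_div Fintype.one_lt_card c₀).symm
    _ ≤ sumDivPow (Fintype.card F) c := sumDivPow_mono (hc v hvV)

end Weight

section Capacity

variable {p m n : ℕ}

theorem hammingNorm_le_capacity (M : Matrix (Fin m) (Fin n) (ZMod p)) {v : Fin n → ZMod p}
    (hv : v ∈ rowSpace M) : hammingNorm v ≤ capacity M :=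
  le_csSup ⟨n, by rintro _ ⟨w, -, rfl⟩; simpa using hammingNorm_le_card_fintype (x := w)⟩ ⟨v, hv, rfl⟩

theorem le_sumDivPow_capacity [Fact p.Prime] (M : Matrix (Fin m) (Fin n) (ZMod p))
    (hM : ∀ j, ∃ i, M i j ≠ 0) : n ≤ sumDivPow p (capacity M) := by
  have hs : ∀ j ∈ (univ : Finset (Fin n)), ∃ v ∈ rowSpace M, v j ≠ 0 := fun j _ => by
    obtain ⟨i, hi⟩ := hM j
    exact ⟨M i, Submodule.subset_span ⟨i, rfl⟩, hi⟩
  simpa using card_le_sumDivPow (rowSpace M) (capacity M) univ hs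
    fun v hv => hammingNorm_le_capacity M hv

theorem le_lambdaP {C : ℕ} (hp : p.Prime) (h : sumDivPow p (C - 1) < n) : C ≤ lambdaP p n := by
  have : Fact p.Prime := ⟨hp⟩
  refine le_csInf ⟨_, 1, fun _ _ => 1, fun _ => ⟨0, one_ne_zero⟩, rfl⟩ ?_
  rintro _ ⟨m, M, hM, rfl⟩
  by_contra! hlt
  have := sumDivPow_mono (q := p) (show capacity M ≤ C - 1 by omega)
  have := le_sumDivPow_capacity M hM
  omega

end Capacity

theorem statement2_general (p : ℕ) (hp : p.Prime) (ℓ k n : ℕ) (hℓk : ℓ ≤ k)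
    (b : ℕ → ℕ)
    (hbj : ∀ j, ℓ ≤ j → j ≤ k → j ≠ ℓ → b j ≤ p - 1)
    (hbℓ1 : 1 ≤ b ℓ) (hbℓ2 : b ℓ ≤ p)
    (hn : n = ∑ j ∈ Finset.Icc ℓ k, b j * sigmaP p j) :
    lambdaP p n ≥ ∑ j ∈ Finset.Icc ℓ k, b j * p ^ j := by
  have hdigits : ∀ j, ℓ < j → j ≤ k → b j < p := fun j hℓj hjk => by
    have := hbj j hℓj.le hjk hℓj.ne'
    have := hp.two_le
    omega
  exact le_lambdaP hp
    (hn ▸ sumDivPow_sum_mul_pow_sub_one_lt hp.one_lt hℓk b hbℓ1 hbℓ2 hdigits)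

theorem statement2 (p : ℕ) (hp : p.Prime) (ℓ k n : ℕ) (hℓk : ℓ ≤ k)
    (b : ℕ → ℕ)
    (hbk : 1 ≤ b k)
    (hbj : ∀ j, ℓ ≤ j → j ≤ k → j ≠ ℓ → b j ≤ p - 1)
    (hbℓ1 : 1 ≤ b ℓ) (hbℓ2 : b ℓ ≤ p)
    (hn : n = ∑ j ∈ Finset.Icc ℓ k, b j * sigmaP p j) :
    lambdaP p n ≥ ∑ j ∈ Finset.Icc ℓ k, b j * p ^ j :=
  statement2_general p hp ℓ k n hℓk b hbj hbℓ1 hbℓ2 hn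
end

section
/- Let p be a prime, let σ_j = Σ_{i=0}^{j} p^i, and let n be a positive integer with n < σ_{k+1}. Then there exist integers b_0, b_1, …, b_k with 0 ≤ b_j ≤ p for all j, such that n = Σ_{j=0}^{k} b_j σ_j, and such that whenever b_j = p, one has b_i = 0 for all i < j. -/
lemma sigmaP_succ_s3 (p k : ℕ) : sigmaP p (k+1) = 1 + p * sigmaP p k := by
  unfold sigmaP
  rw [Finset.sum_range_succ' (fun j => p ^ j) (k+1), Finset.mul_sum]
  simp [pow_succ', add_comm]

lemma sigmaP_pos (p k : ℕ) : 0 < sigmaP p k := by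
  unfold sigmaP
  have : (0:ℕ) < p ^ 0 := by simp
  calc (0:ℕ) < p ^ 0 := this
  _ ≤ _ := Finset.single_le_sum (f := fun j => p ^ j) (by intros; positivity)
      (Finset.mem_range.mpr (by omega))

lemma aux (p : ℕ) (hp : p.Prime) (k : ℕ) : ∀ n, 1 ≤ n → n < sigmaP p (k + 1) →
    ∃ b : ℕ → ℕ,
      (∀ j, j ≤ k → b j ≤ p) ∧
      n = ∑ j ∈ Finset.range (k + 1), b j * sigmaP p j ∧
      (∀ j, j ≤ k → b j = p → ∀ i, i < j → b i = 0) := by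
  have hp2 := hp.two_le
  induction k with
  | zero =>
    intro n hn hnk
    have h1 : sigmaP p (0+1) = 1 + p := by simp [sigmaP, Finset.sum_range_succ]
    refine ⟨fun _ => n, ?_, ?_, ?_⟩
    · intro j hj; show n ≤ p; omega
    · simp [sigmaP]
    · intro j hj _ i hi; omega
  | succ k ih =>
    intro n hn hnk
    have hS := sigmaP_succ_s3 p (k+1)
    have hSpos := sigmaP_pos p (k+1)
    have hnp : n ≤ p * sigmaP p (k+1) := by omega
    by_cases hbig : n < p * sigmaP p (k+1)
    · -- q < p
      have hq := Nat.div_add_mod n (sigmaP p (k+1))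
      have hqlt : n / sigmaP p (k+1) < p :=
        (Nat.div_lt_iff_lt_mul hSpos).mpr hbig
      set q := n / sigmaP p (k+1) with hqdef
      set r := n % sigmaP p (k+1) with hrdef
      have hrlt : r < sigmaP p (k+1) := Nat.mod_lt _ hSpos
      by_cases hr0 : r = 0
      · refine ⟨fun j => if j = k+1 then q else 0, ?_, ?_, ?_⟩
        · intro j hj; show (if j = k+1 then q else 0) ≤ p; split <;> omega
        · rw [Finset.sum_range_succ]
          have hz : ∑ j ∈ Finset.range (k+1),
              (if j = k+1 then q else 0) * sigmaP p j = 0 := by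
            apply Finset.sum_eq_zero
            intro j hj
            have hne : j ≠ k+1 := by have := Finset.mem_range.mp hj; omega
            simp [hne]
          rw [hz, zero_add]
          show n = (if k+1 = k+1 then q else 0) * sigmaP p (k + 1)
          rw [if_pos rfl, mul_comm]
          omega
        · intro j hj hbj i hi
          have hik : i ≠ k+1 := by omega
          show (if i = k+1 then q else 0) = 0
          simp [hik]
      · have hr1 : 1 ≤ r := by omega
        obtain ⟨b', hb1, hb2, hb3⟩ := ih r hr1 hrlt
        refine ⟨fun j => if j = k+1 then q else b' j, ?_, ?_, ?_⟩
        · intro j hj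
          show (if j = k+1 then q else b' j) ≤ p
          split
          · omega
          · exact hb1 j (by omega)
        · rw [Finset.sum_range_succ]
          have he : ∑ j ∈ Finset.range (k+1),
              (if j = k+1 then q else b' j) * sigmaP p j
              = ∑ j ∈ Finset.range (k+1), b' j * sigmaP p j := by
            apply Finset.sum_congr rfl
            intro j hj
            have hne : j ≠ k+1 := by have := Finset.mem_range.mp hj; omega
            simp [hne]
          rw [he, ← hb2]
          show n = r + (if k+1 = k+1 then q else b' (k+1)) * sigmaP p (k + 1)
          rw [if_pos rfl, mul_comm]
          omega
        · intro j hj hbj i hi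
          by_cases hjk : j = k+1
          · have : q = p := by simpa [hjk] using hbj
            omega
          · have hbj : b' j = p := by simpa [hjk] using hbj
            have hik : i ≠ k+1 := by omega
            show (if i = k+1 then q else b' i) = 0
            rw [if_neg hik]
            exact hb3 j (by omega) hbj i hi
    · -- n = p * S
      have hnps : n = p * sigmaP p (k+1) := by omega
      refine ⟨fun j => if j = k+1 then p else 0, ?_, ?_, ?_⟩
      · intro j hj; show (if j = k+1 then p else 0) ≤ p; split <;> omega
      · rw [Finset.sum_range_succ]
        have hz : ∑ j ∈ Finset.range (k+1),
            (if j = k+1 then p else 0) * sigmaP p j = 0 := by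
          apply Finset.sum_eq_zero
          intro j hj
          have hne : j ≠ k+1 := by have := Finset.mem_range.mp hj; omega
          simp [hne]
        rw [hz, zero_add]
        show n = (if k+1 = k+1 then p else 0) * sigmaP p (k + 1)
        rw [if_pos rfl]
        exact hnps
      · intro j hj hbj i hi
        have hik : i ≠ k+1 := by omega
        show (if i = k+1 then p else 0) = 0
        simp [hik]


theorem statement3 (p : ℕ) (hp : p.Prime) (k n : ℕ) (hn : 1 ≤ n)
    (hnk : n < sigmaP p (k + 1)) :
    ∃ b : ℕ → ℕ,
      (∀ j, j ≤ k → b j ≤ p) ∧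
      n = ∑ j ∈ Finset.range (k + 1), b j * sigmaP p j ∧
      (∀ j, j ≤ k → b j = p → ∀ i, i < j → b i = 0) := by
  exact aux p hp k n hn hnk
end

section
/- Let p be a prime and let σ_k = Σ_{j=0}^{k} p^j. For every integer k ≥ 0, λ_p(σ_k) = p^k. -/
/-
Lower bound: if no column of `M` vanishes, then for each column `c` the functional `a ↦ a ⬝ᵥ c`
on `𝔽_p^m` is nonzero off a hyperplane, so the weights of the `p^m` vectors `a ᵥ* M` add up to
`n (p - 1) p^(m-1)`. For `n = σ_k` this is `(p^(k+1) - 1) p^(m-1)`, more than `p^m (p^k - 1)`, so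
some weight is at least `p^k`.

Upper bound: take as columns one representative of each of the `σ_k` points of the projective
space `ℙ(𝔽_p^(k+1))` (the simplex code). A nonzero row combination `a ᵥ* M` vanishes exactly at
the points of the hyperplane `a⊥ ≅ ℙ(𝔽_p^k)`, so its weight is `σ_k - σ_(k-1) = p^k`.
-/

open Finset Module Matrix Projectivization
open scoped LinearAlgebra.Projectivization

lemma Nat.card_subtype_add_card_subtype_not {α : Type*} [Finite α] (P : α → Prop) :
    Nat.card {x // P x} + Nat.card {x // ¬ P x} = Nat.card α := by
  classical
  rw [← Nat.card_sum]
  exact Nat.card_congr (Equiv.sumCompl P)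

section Counting
variable {K V : Type*} [Field K] [AddCommGroup V] [Module K V]

lemma Projectivization.range_map_subtype (W : Submodule K V) :
    Set.range (map W.subtype W.injective_subtype) = {x : ℙ K V | x.rep ∈ W} := by
  ext x
  constructor
  · rintro ⟨y, rfl⟩
    induction y using ind with | h w hw =>
    obtain ⟨a, ha⟩ := exists_smul_eq_mk_rep K (w : V) (by simpa using hw)
    change (mk K (w : V) _).rep ∈ W
    rw [← ha]
    exact W.smul_of_tower_mem a w.2
  · intro hx
    exact ⟨mk K ⟨x.rep, hx⟩ (by simpa using x.rep_nonzero), mk_rep x⟩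

lemma Projectivization.natCard_rep_mem (W : Submodule K V) :
    Nat.card {x : ℙ K V // x.rep ∈ W} = Nat.card (ℙ K W) := by
  rw [← Nat.card_range_of_injective (map_injective W.subtype W.injective_subtype),
    range_map_subtype]
  rfl

variable [Finite V]

lemma Module.Dual.natCard_apply_ne_zero {φ : Dual K V} (hφ : φ ≠ 0) :
    Nat.card {v // φ v ≠ 0} = (Nat.card K - 1) * Nat.card K ^ (finrank K V - 1) := by
  have hd := φ.finrank_ker_add_one_of_ne_zero hφ
  have hsplit := Nat.card_subtype_add_card_subtype_not (fun v => φ v = 0)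
  have hker : Nat.card {v // φ v = 0} = Nat.card K ^ finrank K (LinearMap.ker φ) :=
    natCard_eq_pow_finrank (K := K) (V := LinearMap.ker φ)
  rw [hker, natCard_eq_pow_finrank (K := K) (V := V), ← hd, pow_succ] at hsplit
  simp only [← ne_eq] at hsplit
  rw [← hd, Nat.add_sub_cancel, Nat.sub_one_mul, mul_comm]
  omega

lemma Projectivization.natCard_rep_apply_ne_zero [Finite K] {φ : Dual K V} (hφ : φ ≠ 0) :
    Nat.card {x : ℙ K V // φ x.rep ≠ 0} = Nat.card K ^ (finrank K V - 1) := by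
  have hd := φ.finrank_ker_add_one_of_ne_zero hφ
  have hsplit := Nat.card_subtype_add_card_subtype_not (fun x : ℙ K V => φ x.rep = 0)
  have hker : Nat.card {x : ℙ K V // φ x.rep = 0} = Nat.card (ℙ K (LinearMap.ker φ)) :=
    natCard_rep_mem (LinearMap.ker φ)
  rw [hker, card_of_finrank K (LinearMap.ker φ) rfl, card_of_finrank K V hd.symm,
    sum_range_succ] at hsplit
  simp only [← ne_eq] at hsplit
  rw [← hd, Nat.add_sub_cancel]
  omega

end Counting

section DotProduct
variable {K ι : Type*} [Field K] [Fintype ι] [DecidableEq ι]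

lemma Matrix.dotProductBilin_ne_zero {b : ι → K} (hb : b ≠ 0) : dotProductBilin K K b ≠ 0 := by
  obtain ⟨i, hi⟩ := Function.ne_iff.mp hb
  intro h
  exact hi (by simpa using LinearMap.congr_fun h (Pi.single i 1))

variable [Fintype K] [DecidableEq K]

lemma Matrix.card_filter_dotProduct_ne_zero {b : ι → K} (hb : b ≠ 0) :
    #{a : ι → K | a ⬝ᵥ b ≠ 0} = (Fintype.card K - 1) * Fintype.card K ^ (Fintype.card ι - 1) := by
  have h := Module.Dual.natCard_apply_ne_zero (dotProductBilin_ne_zero (K := K) hb)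
  simp only [dotProductBilin_apply_apply, finrank_fintype_fun_eq_card, Nat.card_eq_fintype_card] at h
  simp_rw [dotProduct_comm _ b]
  rw [← Fintype.card_subtype, h]

lemma Matrix.sum_hammingNorm_vecMul {κ : Type*} [Fintype κ] (M : Matrix ι κ K)
    (hM : ∀ j, ∃ i, M i j ≠ 0) :
    ∑ a : ι → K, hammingNorm (a ᵥ* M) =
      Fintype.card κ * ((Fintype.card K - 1) * Fintype.card K ^ (Fintype.card ι - 1)) := by
  calc ∑ a : ι → K, hammingNorm (a ᵥ* M)
      = ∑ j, #{a : ι → K | a ⬝ᵥ (fun i => M i j) ≠ 0} := by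
        simp only [hammingNorm, card_filter]
        exact sum_comm
    _ = _ := by
      rw [sum_congr rfl fun j _ => card_filter_dotProduct_ne_zero (Function.ne_iff.mpr (hM j)),
        sum_const, card_univ, smul_eq_mul]

lemma Projectivization.hammingNorm_vecMul_rep {κ : Type*} [Fintype κ] (e : κ ≃ ℙ K (ι → K))
    {a : ι → K} (ha : a ≠ 0) :
    hammingNorm (a ᵥ* Matrix.of fun i j => (e j).rep i) = Fintype.card K ^ (Fintype.card ι - 1) := by
  have := natCard_rep_apply_ne_zero (dotProductBilin_ne_zero ha)
  have he : {j // (a ᵥ* Matrix.of fun i j => (e j).rep i) j ≠ 0} ≃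
      {x : ℙ K (ι → K) // dotProductBilin K K a x.rep ≠ 0} :=
    e.subtypeEquiv fun j => Iff.rfl
  rw [hammingNorm, ← Fintype.card_subtype, ← Nat.card_eq_fintype_card, Nat.card_congr he, this]
  simp [Nat.card_eq_fintype_card]

end DotProduct

section Capacity
variable {p m n : ℕ}

lemma rowSpace_eq_range (M : Matrix (Fin m) (Fin n) (ZMod p)) :
    rowSpace M = LinearMap.range M.vecMulLinear := by
  rw [range_vecMulLinear, rowSpace]
  congr 1
  ext v
  exact ⟨fun ⟨i, h⟩ => ⟨i, h.symm⟩, fun ⟨i, h⟩ => ⟨i, h.symm⟩⟩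

lemma capacity_le_iff (M : Matrix (Fin m) (Fin n) (ZMod p)) {c : ℕ} :
    capacity M ≤ c ↔ ∀ a, hammingNorm (a ᵥ* M) ≤ c := by
  have hbdd : BddAbove (hammingNorm '' (rowSpace M : Set (Fin n → ZMod p))) :=
    ⟨n, by rintro _ ⟨v, -, rfl⟩; simpa using hammingNorm_le_card_fintype (x := v)⟩
  rw [capacity, csSup_le_iff hbdd ⟨0, 0, (rowSpace M).zero_mem, hammingNorm_zero⟩]
  simp [rowSpace_eq_range]

lemma sigmaP_mul_sub_one (p k : ℕ) : (sigmaP p k : ℤ) * (p - 1) = p ^ (k + 1) - 1 := by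
  simp [sigmaP, geom_sum_mul]

lemma natCard_projectivization_sigmaP [Fact p.Prime] (k : ℕ) :
    Nat.card (ℙ (ZMod p) (Fin (k + 1) → ZMod p)) = sigmaP p k := by
  simp [card_of_finrank (ZMod p) (Fin (k + 1) → ZMod p) (finrank_fin_fun _), sigmaP]

lemma pow_le_capacity [Fact p.Prime] {k : ℕ} (M : Matrix (Fin m) (Fin (sigmaP p k)) (ZMod p))
    (hM : ∀ j, ∃ i, M i j ≠ 0) : p ^ k ≤ capacity M := by
  by_contra! h
  have hw := (capacity_le_iff M).mp (Nat.le_sub_one_of_lt h)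
  obtain ⟨i, -⟩ := hM ⟨0, Nat.pos_of_ne_zero (by simp [sigmaP, sum_range_succ'])⟩
  obtain ⟨m, rfl⟩ : ∃ m', m = m' + 1 := Nat.exists_eq_add_one.mpr (Fin.pos i)
  have hsum := sum_hammingNorm_vecMul M hM
  have hle : ∑ a : Fin (m + 1) → ZMod p, hammingNorm (a ᵥ* M) ≤ p ^ (m + 1) * (p ^ k - 1) := by
    refine (sum_le_card_nsmul univ _ _ fun a _ => hw a).trans_eq ?_
    simp
  simp only [Fintype.card_fin, ZMod.card, Nat.add_sub_cancel] at hsum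
  rw [hsum] at hle
  have hp := (Fact.out : p.Prime).two_le
  zify [(by omega : 1 ≤ p), Nat.one_le_pow k p (by omega)] at hle
  rw [← mul_assoc, sigmaP_mul_sub_one, pow_succ, pow_succ] at hle
  have hpm : (0 : ℤ) < p ^ m := by positivity
  nlinarith

end Capacity

theorem statement11 (p : ℕ) (hp : p.Prime) (k : ℕ) :
    lambdaP p (sigmaP p k) = p ^ k := by
  have := Fact.mk hp
  let e : Fin (sigmaP p k) ≃ ℙ (ZMod p) (Fin (k + 1) → ZMod p) :=
    (finCongr (natCard_projectivization_sigmaP k).symm).trans (Finite.equivFin _).symm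
  let M : Matrix (Fin (k + 1)) (Fin (sigmaP p k)) (ZMod p) := Matrix.of fun i j => (e j).rep i
  have hM : ∀ j, ∃ i, M i j ≠ 0 := fun j => Function.ne_iff.mp (e j).rep_nonzero
  have hcap : capacity M ≤ p ^ k := by
    refine (capacity_le_iff M).mpr fun a => ?_
    rcases eq_or_ne a 0 with rfl | ha
    · simp
    · rw [hammingNorm_vecMul_rep e ha]
      simp
  refine IsLeast.csInf_eq ⟨⟨k + 1, M, hM, (hcap.antisymm (pow_le_capacity M hM)).symm⟩, ?_⟩
  rintro _ ⟨m, N, hN, rfl⟩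
  exact pow_le_capacity N hN
end
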